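/- Assume k is algebraically closed of characteristic different from 2 and 3, and that the sextic surface S determined by f and g is smooth (in the encoded sense), i.e. S is a del Pezzo surface of degree 1. Then there is no homogeneous polynomial h ∈ k[z,w] of degree 2 with h³ + f·h + g = 0 in k[z,w]. (That is, the anticanonical elliptic fibration of S admits no section of order 2.) -/

import Mathlib

open Polynomial

noncomputable section


/-- The affine chart `w = 1` of the sextic `y² = x³ + f(z,w)x + g(z,w)` in `ℙ(2,3,1,1)`,
as a polynomial in the variables `x = X 0`, `y = X 1`, `t = X 2`. -/
def chart1 {k : Type*} [Field k] (f : Fin 5 → k) (g : Fin 7 → k) : MvPolynomial (Fin 3) k :=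
  - (MvPolynomial.X 1) ^ 2 + (MvPolynomial.X 0) ^ 3
    + (∑ i : Fin 5, MvPolynomial.C (f i) * (MvPolynomial.X 2) ^ (i : ℕ)) * MvPolynomial.X 0
    + ∑ j : Fin 7, MvPolynomial.C (g j) * (MvPolynomial.X 2) ^ (j : ℕ)

/-- The affine chart `z = 1`. -/
def chart2 {k : Type*} [Field k] (f : Fin 5 → k) (g : Fin 7 → k) : MvPolynomial (Fin 3) k :=
  - (MvPolynomial.X 1) ^ 2 + (MvPolynomial.X 0) ^ 3
    + (∑ i : Fin 5, MvPolynomial.C (f i) * (MvPolynomial.X 2) ^ (4 - (i : ℕ))) * MvPolynomial.X 0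
    + ∑ j : Fin 7, MvPolynomial.C (g j) * (MvPolynomial.X 2) ^ (6 - (j : ℕ))

/-- Smoothness of the sextic surface, encoded by the Jacobian criterion on the two affine
charts, with common zeros sought in the algebraic closure. -/
def SmoothSextic (k : Type*) [Field k] (f : Fin 5 → k) (g : Fin 7 → k) : Prop :=
  (∀ v : Fin 3 → AlgebraicClosure k,
      ¬ (MvPolynomial.aeval v (chart1 f g) = 0 ∧
        ∀ s : Fin 3, MvPolynomial.aeval v (MvPolynomial.pderiv s (chart1 f g)) = 0)) ∧
  (∀ v : Fin 3 → AlgebraicClosure k,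
      ¬ (MvPolynomial.aeval v (chart2 f g) = 0 ∧
        ∀ s : Fin 3, MvPolynomial.aeval v (MvPolynomial.pderiv s (chart2 f g)) = 0))

/-- Zariski density of the `k`-rational points of the sextic surface, encoded on the affine
chart `w = 1`: every polynomial `h ∈ k[x,y,t]` vanishing on all `k`-points of the chart lies
in the ideal generated by the defining equation. -/
def DenseRatPoints (k : Type*) [Field k] (f : Fin 5 → k) (g : Fin 7 → k) : Prop :=
  ∀ h : MvPolynomial (Fin 3) k,
    (∀ x y t : k,
        y ^ 2 = x ^ 3 + (∑ i : Fin 5, f i * t ^ (i : ℕ)) * x + ∑ j : Fin 7, g j * t ^ (j : ℕ) →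
        MvPolynomial.eval ![x, y, t] h = 0) →
    h ∈ Ideal.span {((MvPolynomial.X 1 : MvPolynomial (Fin 3) k) ^ 2 - (MvPolynomial.X 0) ^ 3
      - (∑ i : Fin 5, MvPolynomial.C (f i) * (MvPolynomial.X 2) ^ (i : ℕ)) * MvPolynomial.X 0
      - ∑ j : Fin 7, MvPolynomial.C (g j) * (MvPolynomial.X 2) ^ (j : ℕ))}


/-- `f(z,w)` as a bivariate polynomial, with `z = X 0`, `w = X 1`. -/
def fpoly {k : Type*} [Field k] (f : Fin 5 → k) : MvPolynomial (Fin 2) k :=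
  ∑ i : Fin 5, MvPolynomial.C (f i) * (MvPolynomial.X 0) ^ (i : ℕ)
    * (MvPolynomial.X 1) ^ (4 - (i : ℕ))

/-- `g(z,w)` as a bivariate polynomial, with `z = X 0`, `w = X 1`. -/
def gpoly {k : Type*} [Field k] (g : Fin 7 → k) : MvPolynomial (Fin 2) k :=
  ∑ j : Fin 7, MvPolynomial.C (g j) * (MvPolynomial.X 0) ^ (j : ℕ)
    * (MvPolynomial.X 1) ^ (6 - (j : ℕ))

set_option linter.unusedSectionVars false

namespace Stmt16Aux

variable {k : Type*} [Field k]

/-- `∑ f i * X^i`. -/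
lemma fv0 : ((0 : Fin 5) : ℕ) = 0 := rfl
lemma fv1 : ((1 : Fin 5) : ℕ) = 1 := rfl
lemma fv2 : ((2 : Fin 5) : ℕ) = 2 := rfl
lemma fv3 : ((3 : Fin 5) : ℕ) = 3 := rfl
lemma fv4 : ((4 : Fin 5) : ℕ) = 4 := rfl
lemma gv0 : ((0 : Fin 7) : ℕ) = 0 := rfl
lemma gv1 : ((1 : Fin 7) : ℕ) = 1 := rfl
lemma gv2 : ((2 : Fin 7) : ℕ) = 2 := rfl
lemma gv3 : ((3 : Fin 7) : ℕ) = 3 := rfl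
lemma gv4 : ((4 : Fin 7) : ℕ) = 4 := rfl
lemma gv5 : ((5 : Fin 7) : ℕ) = 5 := rfl
lemma gv6 : ((6 : Fin 7) : ℕ) = 6 := rfl

lemma frev0 (f : Fin 5 → k) : (![f 4, f 3, f 2, f 1, f 0] : Fin 5 → k) 0 = f 4 := rfl
lemma frev1 (f : Fin 5 → k) : (![f 4, f 3, f 2, f 1, f 0] : Fin 5 → k) 1 = f 3 := rfl
lemma frev2 (f : Fin 5 → k) : (![f 4, f 3, f 2, f 1, f 0] : Fin 5 → k) 2 = f 2 := rfl
lemma frev3 (f : Fin 5 → k) : (![f 4, f 3, f 2, f 1, f 0] : Fin 5 → k) 3 = f 1 := rfl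
lemma frev4 (f : Fin 5 → k) : (![f 4, f 3, f 2, f 1, f 0] : Fin 5 → k) 4 = f 0 := rfl
lemma grev0 (g : Fin 7 → k) : (![g 6, g 5, g 4, g 3, g 2, g 1, g 0] : Fin 7 → k) 0 = g 6 := rfl
lemma grev1 (g : Fin 7 → k) : (![g 6, g 5, g 4, g 3, g 2, g 1, g 0] : Fin 7 → k) 1 = g 5 := rfl
lemma grev2 (g : Fin 7 → k) : (![g 6, g 5, g 4, g 3, g 2, g 1, g 0] : Fin 7 → k) 2 = g 4 := rfl
lemma grev3 (g : Fin 7 → k) : (![g 6, g 5, g 4, g 3, g 2, g 1, g 0] : Fin 7 → k) 3 = g 3 := rfl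
lemma grev4 (g : Fin 7 → k) : (![g 6, g 5, g 4, g 3, g 2, g 1, g 0] : Fin 7 → k) 4 = g 2 := rfl
lemma grev5 (g : Fin 7 → k) : (![g 6, g 5, g 4, g 3, g 2, g 1, g 0] : Fin 7 → k) 5 = g 1 := rfl
lemma grev6 (g : Fin 7 → k) : (![g 6, g 5, g 4, g 3, g 2, g 1, g 0] : Fin 7 → k) 6 = g 0 := rfl

def Fp (f : Fin 5 → k) : Polynomial k := ∑ i : Fin 5, Polynomial.C (f i) * Polynomial.X ^ (i : ℕ)

def Gp (g : Fin 7 → k) : Polynomial k := ∑ j : Fin 7, Polynomial.C (g j) * Polynomial.X ^ (j : ℕ)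

/-- reversed coefficients -/
def frev (f : Fin 5 → k) : Fin 5 → k := ![f 4, f 3, f 2, f 1, f 0]
def grev (g : Fin 7 → k) : Fin 7 → k := ![g 6, g 5, g 4, g 3, g 2, g 1, g 0]

lemma chart2_eq (f : Fin 5 → k) (g : Fin 7 → k) : chart2 f g = chart1 (frev f) (grev g) := by
  simp only [chart1, chart2, Fin.sum_univ_five, Fin.sum_univ_seven, frev, grev,
    Matrix.cons_val_zero, Matrix.cons_val_one, Matrix.head_cons, Matrix.cons_val_succ,
    fv0, fv1, fv2, fv3, fv4, gv0, gv1, gv2, gv3, gv4, gv5, gv6,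
    frev0, frev1, frev2, frev3, frev4, grev0, grev1, grev2, grev3, grev4, grev5, grev6]
  norm_num
  ring

/-- If the dehomogenized equation has a root of `3p² + F`, we get a singular point
of chart1. -/
lemma sing (f : Fin 5 → k) (g : Fin 7 → k) (p : Polynomial k)
    (hid : p ^ 3 + Fp f * p + Gp g = 0) (t0 : k)
    (h0 : (3 * p ^ 2 + Fp f).eval t0 = 0) :
    ∃ v : Fin 3 → k, MvPolynomial.aeval v (chart1 f g) = 0 ∧
      ∀ s : Fin 3, MvPolynomial.aeval v (MvPolynomial.pderiv s (chart1 f g)) = 0 := by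
  refine ⟨![p.eval t0, 0, t0], ?_, ?_⟩
  · have h1 := congrArg (Polynomial.eval t0) hid
    simp [Fp, Gp, Fin.sum_univ_five, Fin.sum_univ_seven] at h1
    simp [chart1, Fin.sum_univ_five, Fin.sum_univ_seven]
    linear_combination h1
  · intro s
    have h2 := congrArg (fun q => Polynomial.eval t0 (Polynomial.derivative q)) hid
    simp [Fp, Gp, Fin.sum_univ_five, Fin.sum_univ_seven, Polynomial.derivative_pow] at h2
    have h0' : 3 * (p.eval t0) ^ 2 + Polynomial.eval t0 (Fp f) = 0 := by simpa using h0
    simp [Fp, Fin.sum_univ_five] at h0'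
    fin_cases s <;>
      simp [chart1, Fin.sum_univ_five, Fin.sum_univ_seven, MvPolynomial.pderiv_X_self,
        MvPolynomial.pderiv_X_of_ne, MvPolynomial.pderiv_pow, MvPolynomial.pderiv_C_mul]
    · linear_combination h0'
    · linear_combination h2 - (Polynomial.eval t0 (Polynomial.derivative p)) * h0'

/-- dehomogenization at w = 1 -/
def phi (k : Type*) [Field k] : MvPolynomial (Fin 2) k →ₐ[k] Polynomial k :=
  MvPolynomial.aeval ![Polynomial.X, 1]

/-- dehomogenization at z = 1 -/
def psi (k : Type*) [Field k] : MvPolynomial (Fin 2) k →ₐ[k] Polynomial k :=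
  MvPolynomial.aeval ![1, Polynomial.X]

lemma phi_fpoly (f : Fin 5 → k) : phi k (fpoly f) = Fp f := by
  simp [phi, fpoly, Fp, Fin.sum_univ_five]

lemma phi_gpoly (g : Fin 7 → k) : phi k (gpoly g) = Gp g := by
  simp [phi, gpoly, Gp, Fin.sum_univ_seven]

lemma psi_fpoly (f : Fin 5 → k) : psi k (fpoly f) = Fp (frev f) := by
  simp [psi, fpoly, Fp, frev, Fin.sum_univ_five, fv0, fv1, fv2, fv3, fv4,
    frev0, frev1, frev2, frev3, frev4,
    Matrix.cons_val_zero, Matrix.cons_val_one, Matrix.head_cons, Matrix.cons_val_succ]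
  ring

lemma psi_gpoly (g : Fin 7 → k) : psi k (gpoly g) = Gp (grev g) := by
  simp [psi, gpoly, Gp, grev, Fin.sum_univ_seven, gv0, gv1, gv2, gv3, gv4, gv5, gv6,
    grev0, grev1, grev2, grev3, grev4, grev5, grev6,
    Matrix.cons_val_zero, Matrix.cons_val_one, Matrix.head_cons, Matrix.cons_val_succ]
  ring

lemma reflect_sum {R : Type*} [CommSemiring R] {α : Type*} (s : Finset α)
    (F : α → Polynomial R) (n : ℕ) :
    Polynomial.reflect n (∑ x ∈ s, F x) = ∑ x ∈ s, Polynomial.reflect n (F x) := by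
  classical
  induction s using Finset.induction with
  | empty => simp
  | @insert a s h ih => simp [Finset.sum_insert h, Polynomial.reflect_add, ih]

lemma psi_eq_reflect (Q : MvPolynomial (Fin 2) k) (n : ℕ) (hQ : Q.IsHomogeneous n) :
    psi k Q = Polynomial.reflect n (phi k Q) := by
  conv_lhs => rw [← MvPolynomial.support_sum_monomial_coeff Q]
  conv_rhs => rw [← MvPolynomial.support_sum_monomial_coeff Q]
  rw [map_sum, map_sum, reflect_sum]
  refine Finset.sum_congr rfl fun m hm => ?_
  have hc : MvPolynomial.coeff m Q ≠ 0 := MvPolynomial.mem_support_iff.mp hm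
  have hd : m 0 + m 1 = n := by
    have h1 : m.degree = n := by rw [Finsupp.degree_eq_weight_one]; exact hQ hc
    have h2 : m.degree = ∑ i : Fin 2, m i := by
      refine Finset.sum_subset (Finset.subset_univ _) fun i _ hi => ?_
      simpa using Finsupp.notMem_support_iff.mp hi
    rw [h2, Fin.sum_univ_two] at h1
    exact h1
  have hm0 : m 0 ≤ n := by omega
  have e1 : phi k (MvPolynomial.monomial m (MvPolynomial.coeff m Q))
      = Polynomial.C (MvPolynomial.coeff m Q) * Polynomial.X ^ (m 0) := by
    simp [phi, MvPolynomial.aeval_monomial, Finsupp.prod_fintype, Fin.prod_univ_two,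
      Polynomial.algebraMap_eq]
  have e2 : psi k (MvPolynomial.monomial m (MvPolynomial.coeff m Q))
      = Polynomial.C (MvPolynomial.coeff m Q) * Polynomial.X ^ (m 1) := by
    simp [psi, MvPolynomial.aeval_monomial, Finsupp.prod_fintype, Fin.prod_univ_two,
      Polynomial.algebraMap_eq]
  rw [e1, e2, Polynomial.reflect_C_mul, Polynomial.reflect_monomial,
    Polynomial.revAt_le hm0]
  have h3 : n - m 0 = m 1 := by omega
  rw [h3]



lemma aeval_alg {k : Type*} [Field k] {K : Type*} [Field K] [Algebra k K]
    (v : Fin 3 → k) (E : MvPolynomial (Fin 3) k) :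
    MvPolynomial.aeval (fun i => algebraMap k K (v i)) E
      = algebraMap k K (MvPolynomial.aeval v E) := by
  rw [MvPolynomial.aeval_def, MvPolynomial.aeval_def,
    MvPolynomial.eval₂_comp_left (algebraMap k K) (algebraMap k k) v E]
  simp [RingHom.comp_assoc]
  rfl

lemma fpoly_hom {k : Type*} [Field k] (f : Fin 5 → k) : (fpoly f).IsHomogeneous 4 := by
  apply MvPolynomial.IsHomogeneous.sum
  intro i _
  have h := ((MvPolynomial.isHomogeneous_C (Fin 2) (f i)).mul
      (MvPolynomial.isHomogeneous_X_pow 0 (i : ℕ))).mul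
      (MvPolynomial.isHomogeneous_X_pow 1 (4 - (i : ℕ)))
  have e : 0 + (i : ℕ) + (4 - (i : ℕ)) = 4 := by omega
  rwa [e] at h

end Stmt16Aux

open Stmt16Aux

/-- **Lemma**: the anticanonical elliptic fibration of a del Pezzo surface of degree 1 over an
algebraically closed field of characteristic ≠ 2, 3 admits no section of order 2, i.e. there
is no homogeneous `h` of degree 2 with `h³ + f·h + g = 0`. -/
theorem stmt16 (k : Type*) [Field k] [IsAlgClosed k]
    (hk2 : (2 : k) ≠ 0) (hk3 : (3 : k) ≠ 0)
    (f : Fin 5 → k) (g : Fin 7 → k)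
    (hS : SmoothSextic k f g) :
    ¬ ∃ h : MvPolynomial (Fin 2) k, h.IsHomogeneous 2 ∧
      h ^ 3 + fpoly f * h + gpoly g = 0 := by
  rintro ⟨h, hhom, H⟩
  obtain ⟨hS1, hS2⟩ := hS
  have key : ∀ (f' : Fin 5 → k) (g' : Fin 7 → k) (p' : Polynomial k),
      p' ^ 3 + Fp f' * p' + Gp g' = 0 →
      (∃ t0 : k, (3 * p' ^ 2 + Fp f').eval t0 = 0) →
      ∃ v : Fin 3 → AlgebraicClosure k, MvPolynomial.aeval v (chart1 f' g') = 0 ∧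
        ∀ s : Fin 3, MvPolynomial.aeval v (MvPolynomial.pderiv s (chart1 f' g')) = 0 := by
    intro f' g' p' hid ⟨t0, ht0⟩
    obtain ⟨v, h1, h2⟩ := sing f' g' p' hid t0 ht0
    refine ⟨fun i => algebraMap k (AlgebraicClosure k) (v i), ?_, fun s => ?_⟩
    · rw [aeval_alg, h1, map_zero]
    · rw [aeval_alg, h2 s, map_zero]
  set p := phi k h with hp
  have Hp : p ^ 3 + Fp f * p + Gp g = 0 := by
    have := congrArg (phi k) H
    simpa [map_add, map_mul, map_pow, phi_fpoly, phi_gpoly] using this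
  by_cases hr : ∃ t0 : k, (3 * p ^ 2 + Fp f).eval t0 = 0
  · obtain ⟨v, h1, h2⟩ := key f g p Hp hr
    exact hS1 v ⟨h1, h2⟩
  · set P : Polynomial k := 3 * p ^ 2 + Fp f with hP
    have hdeg : P.degree = 0 := by
      by_contra hdeg
      obtain ⟨t0, ht0⟩ := IsAlgClosed.exists_root P hdeg
      exact hr ⟨t0, ht0⟩
    have hPC : P = Polynomial.C (P.coeff 0) :=
      Polynomial.eq_C_of_degree_le_zero (le_of_eq hdeg)
    have Hq : (psi k h) ^ 3 + Fp (frev f) * psi k h + Gp (grev g) = 0 := by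
      have := congrArg (psi k) H
      simpa [map_add, map_mul, map_pow, psi_fpoly, psi_gpoly] using this
    have hQhom : (MvPolynomial.C (3 : k) * h ^ 2 + fpoly f).IsHomogeneous 4 :=
      ((hhom.pow 2).C_mul 3).add (fpoly_hom f)
    have hphiQ : phi k (MvPolynomial.C (3 : k) * h ^ 2 + fpoly f) = P := by
      simp [map_add, map_mul, map_pow, phi_fpoly, hP, map_ofNat]
      exact Or.inl rfl
    have hpsiQ : psi k (MvPolynomial.C (3 : k) * h ^ 2 + fpoly f)
        = 3 * (psi k h) ^ 2 + Fp (frev f) := by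
      simp [map_add, map_mul, map_pow, psi_fpoly, map_ofNat]
    have hzero : (3 * (psi k h) ^ 2 + Fp (frev f)).eval 0 = 0 := by
      rw [← hpsiQ, psi_eq_reflect _ 4 hQhom, hphiQ, hPC, Polynomial.reflect_C]
      simp
    obtain ⟨v, h1, h2⟩ := key (frev f) (grev g) (psi k h) Hq ⟨0, hzero⟩
    rw [← chart2_eq] at h1 h2
    exact hS2 v ⟨h1, h2⟩

end
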